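/- A linear profile θ*(z) = c·π·z + b with c = n + 1/4 (n ∈ ℤ) satisfies the weak anchoring boundary conditions B·θ*'(1) = -sin(2θ*(1)) and B·θ*'(-1) = sin(2θ*(-1)) if and only if cos(2b) = -B·(n+1/4)·π; such solutions exist only if B·(n+1/4)·π ≤ 1, and in particular Type III solutions with n = 0 exist only when B ≤ 4/π. -/

import Mathlib

/-!
Since the slope is `(n + 1/4)π`, the two endpoint angles `2θ(±1) = 2b ± (2n + 1/2)π` differ from `2b`
by a quarter turn modulo `2π`, so `sin (2θ(1)) = cos (2b)` and `sin (2θ(-1)) = -cos (2b)`. With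
`θ' ≡ (n + 1/4)π`, both boundary conditions collapse to `cos (2b) = -B (n + 1/4)π`, and `cos ≥ -1`
gives the bound.
-/

open Real

lemma sin_two_mul_add_quarter_turn (n : ℤ) (x : ℝ) :
    sin (2 * (((n : ℝ) + 1 / 4) * π + x)) = cos (2 * x) := by
  have h : 2 * (((n : ℝ) + 1 / 4) * π + x) = (2 * x + π / 2) + n * (2 * π) := by ring
  rw [h, sin_add_int_mul_two_pi, sin_add_pi_div_two]

lemma sin_two_mul_sub_quarter_turn (n : ℤ) (x : ℝ) :
    sin (2 * (x - ((n : ℝ) + 1 / 4) * π)) = -cos (2 * x) := by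
  have h : 2 * (x - ((n : ℝ) + 1 / 4) * π) = (2 * x - π / 2) - n * (2 * π) := by ring
  rw [h, sin_sub_int_mul_two_pi, sin_sub_pi_div_two]

lemma le_one_of_cos_eq_neg {x y : ℝ} (h : cos x = -y) : y ≤ 1 := by
  linarith [neg_one_le_cos x]

theorem stmt_7_general (B : ℝ) (n : ℤ) (b : ℝ) :
    let θ : ℝ → ℝ := fun z => ((n : ℝ) + 1 / 4) * π * z + b
    ((B * deriv θ 1 = -Real.sin (2 * θ 1) ∧
        B * deriv θ (-1) = Real.sin (2 * θ (-1))) ↔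
      Real.cos (2 * b) = -(B * ((n : ℝ) + 1 / 4) * π)) ∧
    (Real.cos (2 * b) = -(B * ((n : ℝ) + 1 / 4) * π) →
      B * ((n : ℝ) + 1 / 4) * π ≤ 1) ∧
    (n = 0 → Real.cos (2 * b) = -(B * ((n : ℝ) + 1 / 4) * π) →
      B ≤ 4 / π) := by
  intro θ
  have hθ' (z : ℝ) : deriv θ z = ((n : ℝ) + 1 / 4) * π := by
    exact ((((hasDerivAt_id z).const_mul _).add_const b).deriv).trans (mul_one _)
  have hθ1 : sin (2 * θ 1) = cos (2 * b) := by
    simpa only [θ, mul_one] using sin_two_mul_add_quarter_turn n b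
  have hθm1 : sin (2 * θ (-1)) = -cos (2 * b) := by
    simpa only [θ, mul_neg_one, neg_add_eq_sub] using sin_two_mul_sub_quarter_turn n b
  refine ⟨?_, le_one_of_cos_eq_neg, fun hn h => ?_⟩
  · rw [hθ', hθ', hθ1, hθm1]
    constructor
    · rintro ⟨h1, -⟩
      linarith
    · intro h
      constructor <;> linarith
  · subst hn
    have := le_one_of_cos_eq_neg h
    rw [le_div_iff₀ pi_pos]
    push_cast at this
    linarith

theorem stmt_7 (B : ℝ) (hB : 0 < B) (n : ℤ) (b : ℝ) :
    let θ : ℝ → ℝ := fun z => ((n : ℝ) + 1 / 4) * π * z + b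
    ((B * deriv θ 1 = -Real.sin (2 * θ 1) ∧
        B * deriv θ (-1) = Real.sin (2 * θ (-1))) ↔
      Real.cos (2 * b) = -(B * ((n : ℝ) + 1 / 4) * π)) ∧
    (Real.cos (2 * b) = -(B * ((n : ℝ) + 1 / 4) * π) →
      B * ((n : ℝ) + 1 / 4) * π ≤ 1) ∧
    (n = 0 → Real.cos (2 * b) = -(B * ((n : ℝ) + 1 / 4) * π) →
      B ≤ 4 / π) :=
  stmt_7_general B n b
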